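/- Let w̃ : [0, ξ̄] → ℝ be C¹, strictly decreasing, with w̃(0) = π/2, w̃(ξ̄) = 0, and satisfying w̃'(ξ) = −√|k|/√(sin(w̃(ξ))) on (0, ξ̄) for some k ≠ 0. Then 1/√|k| ≤ ξ̄ ≤ π/(2√|k|). -/

import Mathlib

/-!
Separating variables in the ODE, i.e. substituting `x = w ξ`, gives
`√|k| · ξ' = ∫₀^{π/2} √(sin x) dx`, and on `[0, π/2]` we have `sin x ≤ √(sin x) ≤ 1`,
whose integrals are `1` and `π/2`.
-/

open Real Set intervalIntegral

theorem integral_comp_eq_mul_of_mul_deriv_eq {f g : ℝ → ℝ} {a b c : ℝ} (hab : a ≤ b)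
    (hf : ContinuousOn f (Icc a b)) (hdf : DifferentiableOn ℝ f (Ioo a b)) (hg : Continuous g)
    (hfg : ∀ x ∈ Ioo a b, g (f x) * deriv f x = c) :
    ∫ u in f a..f b, g u = c * (b - a) := by
  set G : ℝ → ℝ := fun y => ∫ u in (0 : ℝ)..y, g u
  have hG : ∀ y, HasDerivAt G (g y) y := fun y =>
    integral_hasDerivAt_right (hg.intervalIntegrable _ _) (hg.stronglyMeasurableAtFilter _ _)
      hg.continuousAt
  have hGf : ∀ x ∈ Ioo a b, HasDerivAt (G ∘ f) c x := fun x hx => by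
    have hfx := (hdf.differentiableAt (Ioo_mem_nhds hx.1 hx.2)).hasDerivAt
    simpa only [hfg x hx] using (hG (f x)).comp x hfx
  have hGc : ContinuousOn (G ∘ f) (Icc a b) :=
    (continuous_iff_continuousAt.2 fun y => (hG y).continuousAt).comp_continuousOn hf
  have hFTC := integral_eq_sub_of_hasDerivAt_of_le hab hGc hGf intervalIntegrable_const
  rw [integral_const, smul_eq_mul] at hFTC
  rw [← integral_interval_sub_left (hg.intervalIntegrable _ _) (hg.intervalIntegrable _ _)]
  simp only [Function.comp_apply] at hFTC
  linarith

theorem one_le_integral_sqrt_sin : 1 ≤ ∫ x in (0 : ℝ)..π / 2, √(sin x) := by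
  calc 1 = ∫ x in (0 : ℝ)..π / 2, sin x := by simp
    _ ≤ ∫ x in (0 : ℝ)..π / 2, √(sin x) := by
      refine integral_mono_on (by positivity) (continuous_sin.intervalIntegrable _ _)
        (continuous_sin.sqrt.intervalIntegrable _ _) fun x hx => ?_
      have hsin : 0 ≤ sin x := sin_nonneg_of_nonneg_of_le_pi hx.1 (by linarith [hx.2, pi_pos])
      exact le_sqrt_of_sq_le (by nlinarith [sin_le_one x])

theorem integral_sqrt_sin_le : ∫ x in (0 : ℝ)..π / 2, √(sin x) ≤ π / 2 := by
  calc ∫ x in (0 : ℝ)..π / 2, √(sin x) ≤ ∫ _ in (0 : ℝ)..π / 2, (1 : ℝ) :=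
        integral_mono_on (by positivity) (continuous_sin.sqrt.intervalIntegrable _ _)
          intervalIntegrable_const fun x _ => sqrt_le_one.2 (sin_le_one x)
    _ = π / 2 := by simp

theorem stmt_12_general (k ξ' : ℝ) (hξ : 0 < ξ')
    (w : ℝ → ℝ)
    (hw : ContDiffOn ℝ 1 w (Set.Icc 0 ξ'))
    (hanti : StrictAntiOn w (Set.Icc 0 ξ'))
    (h0 : w 0 = Real.pi / 2) (h1 : w ξ' = 0)
    (hode : ∀ ξ ∈ Set.Ioo 0 ξ',
      deriv w ξ = -Real.sqrt |k| / Real.sqrt (Real.sin (w ξ))) :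
    1 / Real.sqrt |k| ≤ ξ' ∧ ξ' ≤ Real.pi / (2 * Real.sqrt |k|) := by
  have hsep : ∀ ξ ∈ Ioo 0 ξ', √(sin (w ξ)) * deriv w ξ = -√|k| := fun ξ hξ => by
    have hwξ := hanti.mapsTo_Ioo hξ
    rw [h0, h1] at hwξ
    have hsin : 0 < sin (w ξ) := sin_pos_of_pos_of_lt_pi hwξ.1 (by linarith [hwξ.2, pi_pos])
    rw [hode ξ hξ]
    field_simp [(sqrt_pos.2 hsin).ne']
  have hint := integral_comp_eq_mul_of_mul_deriv_eq hξ.le hw.continuousOn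
    ((hw.differentiableOn one_ne_zero).mono Ioo_subset_Icc_self) continuous_sin.sqrt hsep
  rw [h0, h1, integral_symm, sub_zero, neg_mul, neg_inj] at hint
  have hlow := hint ▸ one_le_integral_sqrt_sin
  have hhigh := hint ▸ integral_sqrt_sin_le
  have hk0 : 0 < √|k| := lt_of_le_of_ne (sqrt_nonneg _) fun h => by
    rw [← h, zero_mul] at hlow; linarith
  constructor
  · rw [div_le_iff₀ hk0]; linarith
  · rw [le_div_iff₀ (by positivity)]; linarith

theorem stmt_12 (k ξ' : ℝ) (hk : k ≠ 0) (hξ : 0 < ξ')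
    (w : ℝ → ℝ)
    (hw : ContDiffOn ℝ 1 w (Set.Icc 0 ξ'))
    (hanti : StrictAntiOn w (Set.Icc 0 ξ'))
    (h0 : w 0 = Real.pi / 2) (h1 : w ξ' = 0)
    (hode : ∀ ξ ∈ Set.Ioo 0 ξ',
      deriv w ξ = -Real.sqrt |k| / Real.sqrt (Real.sin (w ξ))) :
    1 / Real.sqrt |k| ≤ ξ' ∧ ξ' ≤ Real.pi / (2 * Real.sqrt |k|) :=
  stmt_12_general k ξ' hξ w hw hanti h0 h1 hode
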